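/- arXiv:1209.2854 — 5 statements merged into one kernel-verified Lean document; each statement's English description precedes it below -/
import Mathlib

section
/- Let U ⊆ ℝⁿ be open, ν a finite Borel measure on U, and N a real-analytic envelope of ν in U. If g : ℝⁿ → ℝ is real-analytic on U and there exists a point y ∈ N with g(y) ≠ 0, then ν({y ∈ N : g(y) ≠ 0}) > 0. In particular, ν cannot be supported on the proper real-analytic subset N ∩ {g = 0} of N. -/
open MeasureTheory

/-- `S` is a real-analytic subset of the open set `U ⊆ ℝⁿ`: `S ⊆ U`, `S` is closed in `U`,
and locally `S` is the common zero set of finitely many functions real-analytic near `U`. -/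
def IsRealAnalyticSubset {n : ℕ} (U S : Set (EuclideanSpace ℝ (Fin n))) : Prop :=
  S ⊆ U ∧ (∃ C : Set (EuclideanSpace ℝ (Fin n)), IsClosed C ∧ S = U ∩ C) ∧
    ∀ x ∈ U, ∃ V : Set (EuclideanSpace ℝ (Fin n)), IsOpen V ∧ x ∈ V ∧ V ⊆ U ∧
      ∃ (k : ℕ) (f : Fin k → EuclideanSpace ℝ (Fin n) → ℝ),
        (∀ i, AnalyticOnNhd ℝ (f i) V) ∧
        S ∩ V = {y ∈ V | ∀ i, f i y = 0}

/-- `N` is a real-analytic envelope of the measure `ν` in the open set `U`: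
`N` is a real-analytic subset of `U` of full `ν`-measure in `U`, contained in every
real-analytic subset of `U` of full `ν`-measure in `U`. -/
def IsRealAnalyticEnvelope {n : ℕ} (ν : Measure (EuclideanSpace ℝ (Fin n)))
    (U N : Set (EuclideanSpace ℝ (Fin n))) : Prop :=
  IsRealAnalyticSubset U N ∧ ν (U \ N) = 0 ∧
    ∀ S : Set (EuclideanSpace ℝ (Fin n)),
      IsRealAnalyticSubset U S → ν (U \ S) = 0 → N ⊆ S

/-- If `g` is real-analytic on `U` and does not vanish identically on the real-analytic
envelope `N` of `ν` in `U`, then the set where `g ≠ 0` on `N` has positive `ν`-measure;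
in particular `ν` is not supported on the proper real-analytic subset `N ∩ {g = 0}`. -/
theorem realAnalyticEnvelope_pos_measure_of_ne_zero {n : ℕ}
    (ν : Measure (EuclideanSpace ℝ (Fin n))) [IsFiniteMeasure ν]
    (U N : Set (EuclideanSpace ℝ (Fin n))) (hU : IsOpen U)
    (hN : IsRealAnalyticEnvelope ν U N)
    (g : EuclideanSpace ℝ (Fin n) → ℝ)
    (hg : AnalyticOnNhd ℝ g U)
    (hne : ∃ y ∈ N, g y ≠ 0) :
    0 < ν {y ∈ N | g y ≠ 0} := by
  rw [pos_iff_ne_zero]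
  intro h
  obtain ⟨hNras, hNfull, hNmin⟩ := hN
  obtain ⟨hNU, ⟨C, hC, hNC⟩, hNloc⟩ := hNras
  set S : Set (EuclideanSpace ℝ (Fin n)) := {y ∈ N | g y = 0} with hSdef
  have hSN : S ⊆ N := fun y hy => hy.1
  have hSU : S ⊆ U := fun y hy => hNU hy.1
  -- S is a real-analytic subset of U
  have hSras : IsRealAnalyticSubset U S := by
    refine ⟨hSU, ⟨closure S, isClosed_closure, ?_⟩, ?_⟩
    · apply Set.Subset.antisymm
      · intro y hy
        exact ⟨hSU hy, subset_closure hy⟩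
      · rintro y ⟨hyU, hycl⟩
        have hyC : y ∈ C := by
          have : closure S ⊆ C := by
            apply closure_minimal _ hC
            intro z hz
            have : z ∈ N := hSN hz
            rw [hNC] at this
            exact this.2
          exact this hycl
        have hyN : y ∈ N := by rw [hNC]; exact ⟨hyU, hyC⟩
        have hgy : g y = 0 := by
          have hcw : ContinuousWithinAt g S y :=
            ((hg y hyU).continuousAt).continuousWithinAt
          have h0 : g y ∈ closure (g '' S) := hcw.mem_closure_image hycl
          have : g '' S ⊆ {0} := by
            rintro _ ⟨z, hz, rfl⟩
            exact hz.2
          have := (closure_minimal this isClosed_singleton) h0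
          simpa using this
        exact ⟨hyN, hgy⟩
    · intro x hxU
      obtain ⟨V, hVopen, hxV, hVU, k, f, hf, hNV⟩ := hNloc x hxU
      refine ⟨V, hVopen, hxV, hVU, k + 1, Fin.cons g f, ?_, ?_⟩
      · intro i
        refine Fin.cases ?_ ?_ i
        · simpa using hg.mono hVU
        · intro j; simpa using hf j
      · ext y
        constructor
        · rintro ⟨⟨hyN, hgy⟩, hyV⟩
          have hy' : y ∈ N ∩ V := ⟨hyN, hyV⟩
          rw [hNV] at hy'
          refine ⟨hyV, ?_⟩
          intro i
          refine Fin.cases ?_ ?_ i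
          · simpa using hgy
          · intro j; simpa using hy'.2 j
        · rintro ⟨hyV, hy⟩
          have hyN : y ∈ N := by
            have : y ∈ N ∩ V := by
              rw [hNV]
              exact ⟨hyV, fun j => by simpa using hy j.succ⟩
            exact this.1
          have hgy : g y = 0 := by simpa using hy 0
          exact ⟨⟨hyN, hgy⟩, hyV⟩
  -- S has full measure
  have hSfull : ν (U \ S) = 0 := by
    have hsub : U \ S ⊆ (U \ N) ∪ {y ∈ N | g y ≠ 0} := by
      rintro y ⟨hyU, hyS⟩
      by_cases hyN : y ∈ N
      · right
        refine ⟨hyN, fun hgy => hyS ⟨hyN, hgy⟩⟩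
      · left; exact ⟨hyU, hyN⟩
    have := measure_mono (μ := ν) hsub
    have hle := this.trans (measure_union_le _ _)
    rw [hNfull, h] at hle
    simpa using hle
  have hNS : N ⊆ S := hNmin S hSras hSfull
  obtain ⟨y, hyN, hgy⟩ := hne
  exact hgy (hNS hyN).2
end

section
/- Let U, U' ⊆ ℝⁿ be open sets and φ : U → U' a bijection such that φ is real-analytic on U and φ⁻¹ is real-analytic on U'. Let ν be a finite Borel measure on U and let ν' = φ_*ν be its pushforward to U'. If N is a real-analytic envelope of ν in U, then φ(N) is a real-analytic envelope of ν' in U'. -/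
open MeasureTheory

lemma image_isRealAnalyticSubset {n : ℕ} {U U' : Set (EuclideanSpace ℝ (Fin n))}
    (hU' : IsOpen U')
    {φ ψ : EuclideanSpace ℝ (Fin n) → EuclideanSpace ℝ (Fin n)}
    (hφ : Set.BijOn φ U U')
    (hψφ : Set.LeftInvOn ψ φ U)
    (hφψ : Set.RightInvOn ψ φ U')
    (hψa : AnalyticOnNhd ℝ ψ U')
    {S : Set (EuclideanSpace ℝ (Fin n))} (hS : IsRealAnalyticSubset U S) :
    IsRealAnalyticSubset U' (φ '' S) := by
  obtain ⟨hSU, ⟨C, hC, hSC⟩, hloc⟩ := hS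
  have hψmaps : Set.MapsTo ψ U' U := by
    intro y hy
    obtain ⟨x, hx, rfl⟩ := hφ.surjOn hy
    rw [hψφ hx]; exact hx
  have himg : φ '' S = {y ∈ U' | ψ y ∈ S} := by
    ext y
    constructor
    · rintro ⟨x, hx, rfl⟩
      exact ⟨hφ.mapsTo (hSU hx), by rw [hψφ (hSU hx)]; exact hx⟩
    · rintro ⟨hy, hyS⟩
      exact ⟨ψ y, hyS, hφψ hy⟩
  have hsub : φ '' S ⊆ U' := by
    rintro y ⟨x, hx, rfl⟩; exact hφ.mapsTo (hSU hx)
  refine ⟨hsub, ?_, ?_⟩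
  · -- relatively closed
    have hdiff : U' \ φ '' S = U' ∩ interior (ψ ⁻¹' Cᶜ) := by
      rw [himg]
      ext y
      constructor
      · rintro ⟨hy, hy2⟩
        have hyC : ψ y ∈ Cᶜ := by
          intro hmem
          exact hy2 ⟨hy, by rw [hSC]; exact ⟨hψmaps hy, hmem⟩⟩
        exact ⟨hy, mem_interior_iff_mem_nhds.2
          ((hψa y hy).continuousAt.preimage_mem_nhds (hC.isOpen_compl.mem_nhds hyC))⟩
      · rintro ⟨hy, hy2⟩
        refine ⟨hy, ?_⟩
        rintro ⟨-, hyS⟩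
        rw [hSC] at hyS
        exact interior_subset hy2 hyS.2
    have hopen : IsOpen (U' \ φ '' S) := by
      rw [hdiff]; exact hU'.inter isOpen_interior
    refine ⟨(U' \ φ '' S)ᶜ, hopen.isClosed_compl, ?_⟩
    ext y
    constructor
    · intro hy
      exact ⟨hsub hy, fun h => h.2 hy⟩
    · rintro ⟨hy, hy2⟩
      by_contra h
      exact hy2 ⟨hy, h⟩
  · -- local analytic equations
    intro y hy
    obtain ⟨V, hVopen, hxV, hVU, k, f, hfa, hSV⟩ := hloc (ψ y) (hψmaps hy)
    refine ⟨U' ∩ interior (ψ ⁻¹' V), hU'.inter isOpen_interior,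
      ⟨hy, mem_interior_iff_mem_nhds.2
        ((hψa y hy).continuousAt.preimage_mem_nhds (hVopen.mem_nhds hxV))⟩,
      Set.inter_subset_left, k, fun i => f i ∘ ψ, ?_, ?_⟩
    · intro i z hz
      exact (hfa i (ψ z) ((interior_subset hz.2 : z ∈ ψ ⁻¹' V))).comp ((hψa z hz.1))
    · ext z
      simp only [Set.mem_inter_iff, Set.mem_setOf_eq, Function.comp_apply]
      constructor
      · rintro ⟨hzS, hz⟩
        refine ⟨hz, fun i => ?_⟩
        rw [himg] at hzS
        have : ψ z ∈ S ∩ V := ⟨hzS.2, (interior_subset hz.2 : z ∈ ψ ⁻¹' V)⟩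
        rw [hSV] at this
        exact this.2 i
      · rintro ⟨hz, hf⟩
        refine ⟨?_, hz⟩
        rw [himg]
        refine ⟨hz.1, ?_⟩
        have : ψ z ∈ {y ∈ V | ∀ i, f i y = 0} := ⟨(interior_subset hz.2 : z ∈ ψ ⁻¹' V), hf⟩
        rw [← hSV] at this
        exact this.1

/-- Equivariance of the real-analytic envelope: if `φ` is a bianalytic bijection from
`U` onto `U'` and `N` is a real-analytic envelope of the finite Borel measure `ν`
(concentrated on `U`) in `U`, then `φ(N)` is a real-analytic envelope of the
pushforward measure `φ_*ν` in `U'`. -/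
theorem realAnalyticEnvelope_map {n : ℕ}
    (ν : Measure (EuclideanSpace ℝ (Fin n))) [IsFiniteMeasure ν]
    (U U' : Set (EuclideanSpace ℝ (Fin n))) (hU : IsOpen U) (hU' : IsOpen U')
    (φ ψ : EuclideanSpace ℝ (Fin n) → EuclideanSpace ℝ (Fin n))
    (hφ : Set.BijOn φ U U')
    (hψφ : Set.LeftInvOn ψ φ U)
    (hφψ : Set.RightInvOn ψ φ U')
    (hφa : AnalyticOnNhd ℝ φ U)
    (hψa : AnalyticOnNhd ℝ ψ U')
    (hνU : ν Uᶜ = 0)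
    (N : Set (EuclideanSpace ℝ (Fin n)))
    (hN : IsRealAnalyticEnvelope ν U N) :
    IsRealAnalyticEnvelope (Measure.map φ ν) U' (φ '' N) := by
  obtain ⟨hNsub, hNfull, hNmin⟩ := hN
  have hinv : Set.BijOn ψ U' U := Set.BijOn.symm ⟨hφψ, hψφ⟩ hφ
  have hφae : AEMeasurable φ ν := by
    have h1 : AEMeasurable φ (ν.restrict U) :=
      hφa.continuousOn.aemeasurable hU.measurableSet
    rwa [Measure.restrict_eq_self_of_ae_mem (ae_iff.mpr (by exact hνU))] at h1
  have hpart1 : IsRealAnalyticSubset U' (φ '' N) :=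
    image_isRealAnalyticSubset hU' hφ hψφ hφψ hψa hNsub
  have hmeasOf : ∀ S : Set (EuclideanSpace ℝ (Fin n)), IsRealAnalyticSubset U' S →
      MeasurableSet (U' \ S) := by
    rintro S ⟨-, ⟨C, hC, rfl⟩, -⟩
    exact hU'.measurableSet.diff (hU'.measurableSet.inter hC.measurableSet)
  refine ⟨hpart1, ?_, ?_⟩
  · rw [Measure.map_apply_of_aemeasurable hφae (hmeasOf _ hpart1)]
    have hsub : φ ⁻¹' (U' \ φ '' N) ⊆ (U \ N) ∪ Uᶜ := by
      intro x hx
      by_cases hxU : x ∈ U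
      · refine Or.inl ⟨hxU, fun hxN => ?_⟩
        exact hx.2 ⟨x, hxN, rfl⟩
      · exact Or.inr hxU
    exact le_antisymm (le_trans (measure_mono hsub)
      (le_trans (measure_union_le _ _) (by rw [hNfull, hνU]; simp))) (zero_le)
  · intro S' hS' hS'0
    have hSsub : IsRealAnalyticSubset U (ψ '' S') :=
      image_isRealAnalyticSubset hU hinv hφψ hψφ hφa hS'
    have hfull : ν (U \ ψ '' S') = 0 := by
      rw [Measure.map_apply_of_aemeasurable hφae (hmeasOf _ hS')] at hS'0
      refine le_antisymm (le_trans (measure_mono ?_) hS'0.le) (zero_le)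
      rintro x ⟨hxU, hx2⟩
      refine ⟨hφ.mapsTo hxU, fun hxS' => ?_⟩
      exact hx2 ⟨φ x, hxS', hψφ hxU⟩
    have hNS : N ⊆ ψ '' S' := hNmin _ hSsub hfull
    intro y hy
    obtain ⟨x, hxN, rfl⟩ := hy
    obtain ⟨z, hz, rfl⟩ := hNS hxN
    rw [hφψ (hS'.1 hz)]
    exact hz
end

section
/- Let V be a real vector space, ω : V × V → ℝ an alternating bilinear form, a, b, δ, v ∈ V and ε ∈ ℝ, with ω(a,b) = 1, ω(δ,a) = ω(δ,b) = 0, and ω(v,a) = ω(v,b) = 0. Then T₃(T₂(T₁(v))) = v + ε·ω(v,δ)·δ. -/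
/-- The first three parallel-transport steps of the curvature computation:
`T₃(T₂(T₁(v))) = v + ε·ω(v,δ)·δ`, where `T₁(u) = u + ω(u,δ)·b`,
`T₂(u) = u - ε·ω(u,a)·(a+δ)` and `T₃(u) = u - ω(u,δ)·(b+ε·a)`, for an alternating
bilinear form `ω` with `ω(a,b) = 1`, `ω(δ,a) = ω(δ,b) = 0`, `ω(v,a) = ω(v,b) = 0`. -/
theorem holonomy_step_three {V : Type*} [AddCommGroup V] [Module ℝ V]
    (ω : V →ₗ[ℝ] V →ₗ[ℝ] ℝ) (hω : ∀ u : V, ω u u = 0)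
    (a b δ v : V) (ε : ℝ)
    (hab : ω a b = 1) (hδa : ω δ a = 0) (hδb : ω δ b = 0)
    (hva : ω v a = 0) (hvb : ω v b = 0)
    (T₁ T₂ T₃ : V → V)
    (hT₁ : ∀ u : V, T₁ u = u + ω u δ • b)
    (hT₂ : ∀ u : V, T₂ u = u - (ε * ω u a) • (a + δ))
    (hT₃ : ∀ u : V, T₃ u = u - ω u δ • (b + ε • a)) :
    T₃ (T₂ (T₁ v)) = v + (ε * ω v δ) • δ := by
  have hskew : ∀ x y : V, ω x y = -ω y x := by
    intro x y
    have h := hω (x + y)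
    simp only [map_add, LinearMap.add_apply, hω] at h
    linarith
  have hba : ω b a = -1 := by rw [hskew]; simp [hab]
  have haδ : ω a δ = 0 := by rw [hskew]; simp [hδa]
  have hbδ : ω b δ = 0 := by rw [hskew]; simp [hδb]
  simp only [hT₁, hT₂, hT₃, map_add, map_sub, map_smul, LinearMap.add_apply,
    LinearMap.sub_apply, LinearMap.smul_apply, smul_eq_mul, hab, hba, haδ, hbδ,
    hva, hvb, hω]
  ring_nf
  module
end

section
/- Let V be a real vector space, ω : V × V → ℝ an alternating bilinear form, a, b, δ, v ∈ V and ε ∈ ℝ, with ω(a,b) = 1, ω(δ,a) = ω(δ,b) = 0, and ω(v,a) = ω(v,b) = 0. Then the full holonomy around the square satisfies T₄(T₃(T₂(T₁(v)))) = v + ε·ω(v,δ)·δ. -/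
/-- The full holonomy around the square: `T₄(T₃(T₂(T₁(v)))) = v + ε·ω(v,δ)·δ`, where
`T₁(u) = u + ω(u,δ)·b`, `T₂(u) = u - ε·ω(u,a)·(a+δ)`, `T₃(u) = u - ω(u,δ)·(b+ε·a)` and
`T₄(u) = u + ε·ω(u,a)·a`, for an alternating bilinear form `ω` with `ω(a,b) = 1`,
`ω(δ,a) = ω(δ,b) = 0`, `ω(v,a) = ω(v,b) = 0`. -/
theorem holonomy_around_square {V : Type*} [AddCommGroup V] [Module ℝ V]
    (ω : V →ₗ[ℝ] V →ₗ[ℝ] ℝ) (hω : ∀ u : V, ω u u = 0)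
    (a b δ v : V) (ε : ℝ)
    (hab : ω a b = 1) (hδa : ω δ a = 0) (hδb : ω δ b = 0)
    (hva : ω v a = 0) (hvb : ω v b = 0)
    (T₁ T₂ T₃ T₄ : V → V)
    (hT₁ : ∀ u : V, T₁ u = u + ω u δ • b)
    (hT₂ : ∀ u : V, T₂ u = u - (ε * ω u a) • (a + δ))
    (hT₃ : ∀ u : V, T₃ u = u - ω u δ • (b + ε • a))
    (hT₄ : ∀ u : V, T₄ u = u + (ε * ω u a) • a) :
    T₄ (T₃ (T₂ (T₁ v))) = v + (ε * ω v δ) • δ := by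
  have skew : ∀ x y : V, ω x y = -ω y x := by
    intro x y
    have h := hω (x + y)
    simp [map_add, hω] at h
    linarith
  have hba : ω b a = -1 := by rw [skew]; simp [hab]
  have haδ : ω a δ = 0 := by rw [skew]; simp [hδa]
  have hbδ : ω b δ = 0 := by rw [skew]; simp [hδb]
  simp only [hT₁, hT₂, hT₃, hT₄, map_add, map_sub, map_smul, smul_eq_mul,
    LinearMap.add_apply, LinearMap.sub_apply, LinearMap.smul_apply,
    hab, hba, haδ, hbδ, hδa, hδb, hva, hvb, hω, smul_add, smul_sub, smul_smul]
  ring_nf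
  module
end

section
/- Let V be a real inner product space with inner product Q, let ω : V × V → ℝ be an alternating bilinear form, and let a, b, δ ∈ V and a linear subspace F ⊆ V satisfy: ω(a,b) = 1, ω(δ,a) = ω(δ,b) = 0, δ ≠ 0, and ω(v,a) = ω(v,b) = 0 for all v ∈ F. For ε ∈ ℝ let Hol_ε = T₄ ∘ T₃ ∘ T₂ ∘ T₁ : V → V be the holonomy around the square. If for every ε ∈ ℝ and every v ∈ F one has Q(Hol_ε(v), Hol_ε(v)) = Q(v,v), then ω(v,δ) = 0 for every v ∈ F. -/
open scoped RealInnerProductSpace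

/-- If the holonomy `Hol ε = T₄ ∘ T₃ ∘ T₂ ∘ T₁` around the square preserves the inner
product `Q` on the subspace `F` for every `ε`, where `F` is `ω`-orthogonal to `a` and
`b`, `ω(a,b) = 1`, `ω(δ,a) = ω(δ,b) = 0` and `δ ≠ 0`, then `ω(v,δ) = 0` for every
`v ∈ F`, i.e. the direction `δ` is symplectically orthogonal to `F`. -/
theorem symplectic_orthogonal_of_square_holonomy_isometric
    {V : Type*} [NormedAddCommGroup V] [InnerProductSpace ℝ V]
    (ω : V →ₗ[ℝ] V →ₗ[ℝ] ℝ) (hω : ∀ u : V, ω u u = 0)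
    (a b δ : V) (F : Submodule ℝ V)
    (hab : ω a b = 1) (hδa : ω δ a = 0) (hδb : ω δ b = 0) (hδ : δ ≠ 0)
    (hFa : ∀ v ∈ F, ω v a = 0) (hFb : ∀ v ∈ F, ω v b = 0)
    (T₁ T₂ T₃ T₄ : ℝ → V → V) (Hol : ℝ → V → V)
    (hT₁ : ∀ (ε : ℝ) (u : V), T₁ ε u = u + ω u δ • b)
    (hT₂ : ∀ (ε : ℝ) (u : V), T₂ ε u = u - (ε * ω u a) • (a + δ))
    (hT₃ : ∀ (ε : ℝ) (u : V), T₃ ε u = u - ω u δ • (b + ε • a))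
    (hT₄ : ∀ (ε : ℝ) (u : V), T₄ ε u = u + (ε * ω u a) • a)
    (hHol : ∀ ε : ℝ, Hol ε = T₄ ε ∘ T₃ ε ∘ T₂ ε ∘ T₁ ε)
    (hQ : ∀ (ε : ℝ), ∀ v ∈ F, ⟪Hol ε v, Hol ε v⟫ = ⟪v, v⟫) :
    ∀ v ∈ F, ω v δ = 0 := by
  have skew : ∀ u w : V, ω u w = - ω w u := by
    intro u w
    have h := hω (u + w)
    simp only [map_add, LinearMap.add_apply, hω] at h
    linarith
  have hba : ω b a = -1 := by rw [skew]; simp [hab]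
  have hbδ : ω b δ = 0 := by rw [skew]; simp [hδb]
  have haδ : ω a δ = 0 := by rw [skew]; simp [hδa]
  intro v hv
  set c := ω v δ with hc
  have hva := hFa v hv
  have hvb := hFb v hv
  have hHolv : ∀ ε : ℝ, Hol ε v = v + (ε * c) • δ := by
    intro ε
    rw [hHol]
    simp only [Function.comp_apply, hT₁, hT₂, hT₃, hT₄]
    simp only [map_add, map_sub, map_smul, LinearMap.add_apply, LinearMap.sub_apply,
      LinearMap.smul_apply, smul_eq_mul, hω, hba, hbδ, haδ, hab, ← hc, hva, hvb, hδa, hδb]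
    match_scalars <;> ring
  have key : ∀ ε : ℝ, 2 * (ε * c) * ⟪v, δ⟫ + (ε * c) ^ 2 * ⟪δ, δ⟫ = 0 := by
    intro ε
    have h := hQ ε v hv
    rw [hHolv ε] at h
    rw [real_inner_add_add_self, real_inner_smul_right, real_inner_smul_left,
      real_inner_smul_right] at h
    nlinarith [h]
  have h1 := key 1
  have h2 := key (-1)
  have hcc : c ^ 2 * ⟪δ, δ⟫ = 0 := by nlinarith
  have hδpos : (0 : ℝ) < ⟪δ, δ⟫ := by
    rw [real_inner_self_eq_norm_sq]
    exact pow_pos (norm_pos_iff.mpr hδ) 2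
  have : c ^ 2 = 0 := by
    rcases mul_eq_zero.mp hcc with h | h
    · exact h
    · exact absurd h (ne_of_gt hδpos)
  exact pow_eq_zero_iff (by norm_num) |>.mp this
end
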